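/- Let f ∈ S_{(d_1,d_2)} be a nonzero bihomogeneous polynomial of bidegree (d_1,d_2) and A = T/Ann(f). Then for all 0 ≤ i ≤ d_1 and 0 ≤ j ≤ d_2, the multiplication map A_{(i,j)} × A_{(d_1−i,d_2−j)} → A_{(d_1,d_2)} is a perfect pairing: dim_K A_{(d_1,d_2)} = 1, and if a ∈ A_{(i,j)} satisfies a·b = 0 for all b ∈ A_{(d_1−i,d_2−j)}, then a = 0. -/

import Mathlib

open MvPolynomial

namespace CW

variable {σ K : Type*} [CommSemiring K]

/-- A generic "monomial contraction-type" action of the polynomial ring on itself,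
determined by a structure coefficient `ν c a` (the coefficient produced when the
operator monomial with exponent `a` acts on the monomial with exponent `c`). -/
noncomputable def genAct (ν : (σ →₀ ℕ) → (σ →₀ ℕ) → K) (α f : MvPolynomial σ K) :
    MvPolynomial σ K :=
  Finsupp.sum (AddMonoidAlgebra.coeff α) fun a ca =>
    Finsupp.sum (AddMonoidAlgebra.coeff f) fun c cf => monomial (c - a) (ν c a * (ca * cf))

theorem genAct_zero_left (ν : (σ →₀ ℕ) → (σ →₀ ℕ) → K) (f : MvPolynomial σ K) :
    genAct ν 0 f = 0 :=
  Finsupp.sum_zero_index (h := fun _ _ => _)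

theorem genAct_zero_right (ν : (σ →₀ ℕ) → (σ →₀ ℕ) → K) (α : MvPolynomial σ K) :
    genAct ν α 0 = 0 := by
  unfold genAct
  simp only [AddMonoidAlgebra.coeff_zero, Finsupp.sum_zero_index, Finsupp.sum_fun_zero]

theorem genAct_add_left (ν : (σ →₀ ℕ) → (σ →₀ ℕ) → K) (α β f : MvPolynomial σ K) :
    genAct ν (α + β) f = genAct ν α f + genAct ν β f := by
  unfold genAct
  rw [AddMonoidAlgebra.coeff_add]
  apply Finsupp.sum_add_index'
  · intro a
    simp only [mul_zero, zero_mul, map_zero, Finsupp.sum_fun_zero]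
  · intro a b₁ b₂
    rw [← Finsupp.sum_add]
    apply Finsupp.sum_congr
    intro c _
    rw [add_mul, mul_add, map_add]

theorem genAct_add_right (ν : (σ →₀ ℕ) → (σ →₀ ℕ) → K) (α f g : MvPolynomial σ K) :
    genAct ν α (f + g) = genAct ν α f + genAct ν α g := by
  unfold genAct
  rw [← Finsupp.sum_add]
  apply Finsupp.sum_congr
  intro a _
  rw [AddMonoidAlgebra.coeff_add]
  apply Finsupp.sum_add_index'
  · intro c
    simp only [mul_zero, map_zero]
  · intro c c₁ c₂
    rw [mul_add, mul_add, map_add]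

theorem genAct_monomial (ν : (σ →₀ ℕ) → (σ →₀ ℕ) → K) (a c : σ →₀ ℕ) (r s : K) :
    genAct ν (monomial a r) (monomial c s) = monomial (c - a) (ν c a * (r * s)) := by
  unfold genAct
  rw [← single_eq_monomial a r, ← single_eq_monomial c s]
  simp only [AddMonoidAlgebra.coeff_single]
  rw [Finsupp.sum_single_index, Finsupp.sum_single_index]
  · simp only [mul_zero, map_zero]
  · simp only [mul_zero, zero_mul, map_zero, Finsupp.sum_fun_zero]

theorem genAct_mul {ν : (σ →₀ ℕ) → (σ →₀ ℕ) → K}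
    (hν : ∀ c a b, ν c (a + b) = ν c b * ν (c - b) a) (α β f : MvPolynomial σ K) :
    genAct ν (α * β) f = genAct ν α (genAct ν β f) := by
  induction α using MvPolynomial.induction_on' with
  | add p q hp hq => rw [add_mul, genAct_add_left, hp, hq, genAct_add_left]
  | monomial a r =>
    induction β using MvPolynomial.induction_on' with
    | add p q hp hq =>
      rw [mul_add, genAct_add_left, hp, hq, ← genAct_add_right, genAct_add_left]
    | monomial b s =>
      induction f using MvPolynomial.induction_on' with
      | add p q hp hq =>
        rw [genAct_add_right, hp, hq, ← genAct_add_right, ← genAct_add_right]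
      | monomial c t =>
        rw [monomial_mul, genAct_monomial, genAct_monomial, genAct_monomial,
          show c - (a + b) = c - b - a from by rw [tsub_tsub, add_comm], hν]
        congr 1
        ring

/-- The annihilator ideal of `f` under the action `genAct ν`. -/
noncomputable def annG (ν : (σ →₀ ℕ) → (σ →₀ ℕ) → K)
    (hν : ∀ c a b, ν c (a + b) = ν c b * ν (c - b) a) (f : MvPolynomial σ K) :
    Ideal (MvPolynomial σ K) where
  carrier := {α | genAct ν α f = 0}
  zero_mem' := genAct_zero_left ν f
  add_mem' := by
    intro a b ha hb
    show genAct ν (a + b) f = 0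
    rw [genAct_add_left, ha, hb, add_zero]
  smul_mem' := by
    intro c α hα
    show genAct ν (c * α) f = 0
    rw [genAct_mul hν, hα, genAct_zero_right]

/-- Structure coefficient of the contraction (apolarity) action: `X^a` sends `x^c`
to `x^(c-a)` if `a ≤ c` and to `0` otherwise. -/
noncomputable def cnu (c a : σ →₀ ℕ) : K :=
  open scoped Classical in if a ≤ c then 1 else 0

theorem cnu_mul (c a b : σ →₀ ℕ) :
    (cnu c (a + b) : K) = cnu c b * cnu (c - b) a := by
  classical
  unfold cnu
  by_cases hb : b ≤ c
  · by_cases ha : a ≤ c - b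
    · have h : a + b ≤ c := (le_tsub_iff_right hb).mp ha
      simp [hb, ha, h]
    · have h : ¬ a + b ≤ c := fun h => ha ((le_tsub_iff_right hb).mpr h)
      simp [hb, ha, h]
  · have h : ¬ a + b ≤ c := fun h => hb (le_trans le_add_self h)
    simp [hb, h]

/-- The contraction action `α ∘ f`. -/
noncomputable def cAct (α f : MvPolynomial σ K) : MvPolynomial σ K :=
  genAct cnu α f

/-- The annihilator `Ann(f)` of `f` under the contraction action, as an ideal. -/
noncomputable def cAnn (f : MvPolynomial σ K) : Ideal (MvPolynomial σ K) :=
  annG cnu cnu_mul f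

theorem mem_cAnn {f α : MvPolynomial σ K} : α ∈ cAnn f ↔ cAct α f = 0 := Iff.rfl

/-- The `K`-submodule of polynomials all of whose monomials satisfy `P`. -/
noncomputable def bihom (K : Type*) [CommSemiring K] {σ : Type*} (P : (σ →₀ ℕ) → Prop) :
    Submodule K (MvPolynomial σ K) where
  carrier := {p | ∀ c ∈ p.support, P c}
  zero_mem' := by
    intro c hc
    simp at hc
  add_mem' := by
    classical
    intro p q hp hq c hc
    rcases Finset.mem_union.mp (MvPolynomial.support_add hc) with h | h
    · exact hp c h
    · exact hq c h
  smul_mem' := by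
    intro k p hp c hc
    exact hp c (MvPolynomial.support_smul hc)

/-- The x-degree of an exponent vector. -/
def degX {n m : ℕ} (c : (Fin (n + 1) ⊕ Fin m) →₀ ℕ) : ℕ := ∑ r, c (Sum.inl r)

/-- The u-degree of an exponent vector. -/
def degU {n m : ℕ} (c : (Fin (n + 1) ⊕ Fin m) →₀ ℕ) : ℕ := ∑ k, c (Sum.inr k)

/-- The bihomogeneous component `T_(i,j)`. -/
noncomputable def Tbi (K : Type*) [CommSemiring K] {n m : ℕ} (i j : ℕ) :
    Submodule K (MvPolynomial (Fin (n + 1) ⊕ Fin m) K) :=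
  bihom K fun c => degX c = i ∧ degU c = j

/-- The bigraded component `A_(i,j)` of `A = T ⧸ Ann(f)`: the image of `T_(i,j)`
in the quotient. -/
noncomputable def Abi {K : Type*} [Field K] {n m : ℕ}
    (f : MvPolynomial (Fin (n + 1) ⊕ Fin m) K) (i j : ℕ) :
    Submodule K (MvPolynomial (Fin (n + 1) ⊕ Fin m) K ⧸ cAnn f) :=
  (Tbi K i j).map (Ideal.Quotient.mkₐ K (cAnn f)).toLinearMap

section Degrees

variable {n m : ℕ}

lemma degX_tsub {a c : Fin (n + 1) ⊕ Fin m →₀ ℕ} (h : a ≤ c) :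
    degX (c - a) = degX c - degX a := by
  have : degX (c - a) + degX a = degX c := by
    simp only [degX, ← Finset.sum_add_distrib, Finsupp.tsub_apply]
    exact Finset.sum_congr rfl fun r _ => tsub_add_cancel_of_le (h _)
  omega

lemma degU_tsub {a c : Fin (n + 1) ⊕ Fin m →₀ ℕ} (h : a ≤ c) :
    degU (c - a) = degU c - degU a := by
  have : degU (c - a) + degU a = degU c := by
    simp only [degU, ← Finset.sum_add_distrib, Finsupp.tsub_apply]
    exact Finset.sum_congr rfl fun k _ => tsub_add_cancel_of_le (h _)
  omega

lemma eq_of_le_of_degX_eq_of_degU_eq {c c' : Fin (n + 1) ⊕ Fin m →₀ ℕ} (hle : c ≤ c')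
    (hX : degX c = degX c') (hU : degU c = degU c') : c = c' := by
  have hinl := (Finset.sum_eq_sum_iff_of_le fun r _ => hle (Sum.inl r)).mp hX
  have hinr := (Finset.sum_eq_sum_iff_of_le fun k _ => hle (Sum.inr k)).mp hU
  ext (r | k)
  · exact hinl r (Finset.mem_univ r)
  · exact hinr k (Finset.mem_univ k)

end Degrees

section Contraction

variable {K : Type*} [CommSemiring K] {n m : ℕ}

lemma monomial_mem_Tbi {i j : ℕ} {e : Fin (n + 1) ⊕ Fin m →₀ ℕ} {r : K}
    (h : r ≠ 0 → degX e = i ∧ degU e = j) : monomial e r ∈ Tbi K i j := by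
  classical
  intro c hc
  rw [support_monomial] at hc
  split_ifs at hc with hr
  · simp at hc
  · rw [Finset.mem_singleton.mp hc]
    exact h hr

lemma eq_C_of_mem_Tbi_zero {g : MvPolynomial (Fin (n + 1) ⊕ Fin m) K} (hg : g ∈ Tbi K 0 0) :
    g = C (coeff 0 g) := by
  ext c
  rw [coeff_C]
  split_ifs with hc
  · rw [hc]
  · by_contra hne
    obtain ⟨hX, hU⟩ := hg c (mem_support_iff.mpr hne)
    exact hc (eq_of_le_of_degX_eq_of_degU_eq (zero_le (a := c))
      (by rw [hX]; simp [degX]) (by rw [hU]; simp [degU]))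

lemma cAct_mul (α β g : MvPolynomial (Fin (n + 1) ⊕ Fin m) K) :
    cAct (α * β) g = cAct α (cAct β g) :=
  genAct_mul cnu_mul α β g

/-- Among exponents of one bidegree, `c ≤ b` forces `c = b`, so `X^c` kills every other term. -/
lemma cAct_monomial_of_mem_Tbi {p q : ℕ} {g : MvPolynomial (Fin (n + 1) ⊕ Fin m) K}
    (hg : g ∈ Tbi K p q) {c : Fin (n + 1) ⊕ Fin m →₀ ℕ} (hcX : degX c = p) (hcU : degU c = q)
    (r : K) : cAct (monomial c r) g = C (r * coeff c g) := by
  classical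
  unfold cAct genAct
  rw [← single_eq_monomial]
  simp only [AddMonoidAlgebra.coeff_single]
  rw [Finsupp.sum_single_index (by simp only [zero_mul, mul_zero, map_zero, Finsupp.sum_fun_zero])]
  rw [Finsupp.sum, Finset.sum_eq_single c]
  · rw [tsub_self, show (cnu c c : K) = 1 from if_pos le_rfl, one_mul, ← C_apply]
    rfl
  · intro b hb hbc
    obtain ⟨hbX, hbU⟩ := hg b hb
    have hcb : ¬ c ≤ b := fun h =>
      hbc (eq_of_le_of_degX_eq_of_degU_eq h (by rw [hcX, hbX]) (by rw [hcU, hbU])).symm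
    rw [show (cnu b c : K) = 0 from if_neg hcb, zero_mul, map_zero]
  · intro hc
    rw [Finsupp.notMem_support_iff.mp hc, mul_zero, mul_zero, map_zero]

lemma cAct_mem_Tbi {i j p q : ℕ} {α g : MvPolynomial (Fin (n + 1) ⊕ Fin m) K}
    (hα : α ∈ Tbi K i j) (hg : g ∈ Tbi K p q) : cAct α g ∈ Tbi K (p - i) (q - j) := by
  classical
  refine Submodule.sum_mem _ fun a ha => Submodule.sum_mem _ fun c hc => ?_
  refine monomial_mem_Tbi fun hne => ?_
  have hac : a ≤ c := by
    by_contra hac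
    exact hne (by rw [show (cnu c a : K) = 0 from if_neg hac, zero_mul])
  obtain ⟨haX, haU⟩ := hα a ha
  obtain ⟨hcX, hcU⟩ := hg c hc
  rw [degX_tsub hac, degU_tsub hac, haX, haU, hcX, hcU]
  exact ⟨rfl, rfl⟩

lemma exists_monomial_cAct_ne_zero {p q : ℕ} {g : MvPolynomial (Fin (n + 1) ⊕ Fin m) K}
    (hg : g ∈ Tbi K p q) (hg0 : g ≠ 0) :
    ∃ c, monomial c (1 : K) ∈ Tbi K p q ∧ cAct (monomial c 1) g ≠ 0 := by
  obtain ⟨c, hc⟩ := support_nonempty.mpr hg0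
  obtain ⟨hcX, hcU⟩ := hg c hc
  refine ⟨c, monomial_mem_Tbi fun _ => ⟨hcX, hcU⟩, ?_⟩
  rw [cAct_monomial_of_mem_Tbi hg hcX hcU, one_mul, Ne, C_eq_zero]
  exact mem_support_iff.mp hc

end Contraction

section Quotient

variable {K : Type*} [CommRing K] {n m : ℕ}

lemma cAct_sub_left (α β g : MvPolynomial (Fin (n + 1) ⊕ Fin m) K) :
    cAct (α - β) g = cAct α g - cAct β g :=
  eq_sub_of_add_eq (by unfold cAct; rw [← genAct_add_left, sub_add_cancel])

lemma mk_cAnn_eq_zero_iff {f α : MvPolynomial (Fin (n + 1) ⊕ Fin m) K} :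
    Ideal.Quotient.mk (cAnn f) α = 0 ↔ cAct α f = 0 :=
  Ideal.Quotient.eq_zero_iff_mem

end Quotient

section Pairing

variable {K : Type*} [Field K] {n m d₁ d₂ : ℕ} {f : MvPolynomial (Fin (n + 1) ⊕ Fin m) K}

/-- Every `α ∈ T_(d₁,d₂)` contracts `f` to a constant, hence agrees modulo `Ann f` with a multiple
of any monomial `X^c₀` occurring in `f`. -/
lemma Abi_eq_span_singleton (hf : f ∈ Tbi K d₁ d₂) {c₀ : Fin (n + 1) ⊕ Fin m →₀ ℕ}
    (hc₀ : c₀ ∈ f.support) :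
    Abi f d₁ d₂ = K ∙ Ideal.Quotient.mk (cAnn f) (monomial c₀ 1) := by
  obtain ⟨hc₀X, hc₀U⟩ := hf c₀ hc₀
  apply le_antisymm
  · rintro _ ⟨α, hα, rfl⟩
    have hαf : cAct α f ∈ Tbi K 0 0 := by simpa using cAct_mem_Tbi hα hf
    refine Submodule.mem_span_singleton.mpr ⟨coeff 0 (cAct α f) / coeff c₀ f, ?_⟩
    rw [← Ideal.Quotient.mkₐ_eq_mk K, ← map_smul, smul_monomial, smul_eq_mul, mul_one,
      AlgHom.toLinearMap_apply, Ideal.Quotient.mkₐ_eq_mk, Ideal.Quotient.mk_eq_mk_iff_sub_mem,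
      mem_cAnn, cAct_sub_left, cAct_monomial_of_mem_Tbi hf hc₀X hc₀U,
      div_mul_cancel₀ _ (mem_support_iff.mp hc₀), ← eq_C_of_mem_Tbi_zero hαf, sub_self]
  · rw [Submodule.span_le, Set.singleton_subset_iff]
    exact ⟨monomial c₀ 1, monomial_mem_Tbi fun _ => ⟨hc₀X, hc₀U⟩, rfl⟩

lemma finrank_Abi_eq_one (hf : f ∈ Tbi K d₁ d₂) (hf0 : f ≠ 0) :
    Module.finrank K (Abi f d₁ d₂) = 1 := by
  obtain ⟨c₀, hc₀⟩ := support_nonempty.mpr hf0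
  obtain ⟨hc₀X, hc₀U⟩ := hf c₀ hc₀
  rw [Abi_eq_span_singleton hf hc₀]
  refine finrank_span_singleton ?_
  rw [Ne, mk_cAnn_eq_zero_iff, cAct_monomial_of_mem_Tbi hf hc₀X hc₀U, one_mul, C_eq_zero]
  exact mem_support_iff.mp hc₀

/-- If `α ∘ f ≠ 0`, some monomial `X^c` of complementary bidegree has `X^c α ∘ f ≠ 0`. -/
lemma eq_zero_of_forall_mul_Abi_eq_zero (hf : f ∈ Tbi K d₁ d₂) {i j : ℕ}
    {a : MvPolynomial (Fin (n + 1) ⊕ Fin m) K ⧸ cAnn f}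
    (ha : a ∈ Abi f i j) (hb : ∀ b ∈ Abi f (d₁ - i) (d₂ - j), a * b = 0) : a = 0 := by
  obtain ⟨α, hα, rfl⟩ := ha
  rw [AlgHom.toLinearMap_apply, Ideal.Quotient.mkₐ_eq_mk, mk_cAnn_eq_zero_iff]
  by_contra hαf
  obtain ⟨c, hc, hcαf⟩ := exists_monomial_cAct_ne_zero (cAct_mem_Tbi hα hf) hαf
  apply hcαf
  rw [← cAct_mul, mul_comm, ← mk_cAnn_eq_zero_iff, map_mul]
  exact hb _ ⟨monomial c 1, hc, rfl⟩

end Pairing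

theorem stmt_8_general {K : Type*} [Field K] (n m d₁ d₂ : ℕ)
    (f : MvPolynomial (Fin (n + 1) ⊕ Fin m) K)
    (hf0 : f ≠ 0) (hf : f ∈ Tbi K (n := n) (m := m) d₁ d₂)
    (i j : ℕ) :
    Module.finrank K (Abi f d₁ d₂) = 1 ∧
    ∀ a ∈ Abi f i j, (∀ b ∈ Abi f (d₁ - i) (d₂ - j), a * b = 0) → a = 0 :=
  ⟨finrank_Abi_eq_one hf hf0, fun _ ha hb => eq_zero_of_forall_mul_Abi_eq_zero hf ha hb⟩

theorem stmt_8 {K : Type*} [Field K] [CharZero K] (n m d₁ d₂ : ℕ)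
    (f : MvPolynomial (Fin (n + 1) ⊕ Fin m) K)
    (hf0 : f ≠ 0) (hf : f ∈ Tbi K (n := n) (m := m) d₁ d₂)
    (i j : ℕ) (hi : i ≤ d₁) (hj : j ≤ d₂) :
    Module.finrank K (Abi f d₁ d₂) = 1 ∧
    ∀ a ∈ Abi f i j, (∀ b ∈ Abi f (d₁ - i) (d₂ - j), a * b = 0) → a = 0 :=
  stmt_8_general n m d₁ d₂ f hf0 hf i j

end CW
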